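/- arXiv:1207.3606 — 4 statements merged into one kernel-verified Lean document; each statement's English description precedes it below -/
import Mathlib

section
/- If p_i(A) = A_i (i-punctual distance-regularity in its matrix form), then the average number of shortest i-paths per vertex satisfies ω_i·P̄_i = sqrt(p_i(λ0)·δ̄_i), i.e., P̄_i = (1/ω_i)·sqrt(p_i(λ0)·δ̄_i), where ω_i is the leading coefficient of p_i. -/
/-!
Since `(A ^ k) u v` counts walks of length `k`, it vanishes when `k < dist u v`; so on the
entries at distance `i` only the leading term of `p` survives in `p(A)`, giving
`⟨p(A), A_i⟩ = ω ⟨A^i, A_i⟩ = ω P̄_i`. With `p(A) = A_i` the left side is `δ̄_i`, and also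
`δ̄_i = ‖p(A)‖² = p(λ₀)`, so `sqrt (p(λ₀) δ̄_i) = δ̄_i = ω P̄_i`.
-/

open Matrix Polynomial Finset

/-- The distance-`i` matrix of a graph on `Fin n`. -/
noncomputable def distMatrix {n : ℕ} (G : SimpleGraph (Fin n)) (i : ℕ) :
    Matrix (Fin n) (Fin n) ℝ :=
  Matrix.of fun u v => if G.dist u v = i then 1 else 0

/-- The 0-1 matrix of pairs at distance at most `i` (`S_i`). -/
noncomputable def ballMatrix {n : ℕ} (G : SimpleGraph (Fin n)) (i : ℕ) :
    Matrix (Fin n) (Fin n) ℝ :=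
  Matrix.of fun u v => if G.dist u v ≤ i then 1 else 0

/-- The normalized trace inner product `⟨R,S⟩ = (1/n) tr (R S)`. -/
noncomputable def ip {n : ℕ} (R S : Matrix (Fin n) (Fin n) ℝ) : ℝ :=
  (1 / (n : ℝ)) * (R * S).trace

/-- Average crossed local multiplicity `m̄_{ij} = ⟨E_j, A_i⟩ / ‖A_i‖²`. -/
noncomputable def mbar {n : ℕ} (G : SimpleGraph (Fin n)) (E : Matrix (Fin n) (Fin n) ℝ)
    (i : ℕ) : ℝ :=
  ip E (distMatrix G i) / ip (distMatrix G i) (distMatrix G i)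

namespace SimpleGraph

variable {V R : Type*} [Fintype V] [DecidableEq V] (G : SimpleGraph V) [DecidableRel G.Adj]

theorem adjMatrix_pow_apply_eq_zero_of_lt_dist [Semiring R] {u v : V} {k : ℕ}
    (h : k < G.dist u v) : (G.adjMatrix R ^ k) u v = 0 := by
  have hnone : IsEmpty {q : G.Walk u v | q.length = k} :=
    ⟨fun ⟨q, hq⟩ => (G.dist_le q).not_gt (hq ▸ h)⟩
  rw [adjMatrix_pow_apply_eq_card_walk, Fintype.card_eq_zero, Nat.cast_zero]

theorem aeval_adjMatrix_apply_of_natDegree_le_dist [CommSemiring R] {u v : V} {p : R[X]}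
    (hp : p.natDegree ≤ G.dist u v) :
    aeval (G.adjMatrix R) p u v = p.coeff (G.dist u v) * (G.adjMatrix R ^ G.dist u v) u v := by
  rw [aeval_eq_sum_range' (Nat.lt_succ_of_le hp), sum_range_succ, Matrix.add_apply,
    Matrix.sum_apply, sum_eq_zero fun k hk => ?_, zero_add, Matrix.smul_apply, smul_eq_mul]
  rw [Matrix.smul_apply, G.adjMatrix_pow_apply_eq_zero_of_lt_dist (mem_range.mp hk), smul_zero]

end SimpleGraph

variable {n : ℕ}

theorem distMatrix_isSymm (G : SimpleGraph (Fin n)) (i : ℕ) : (distMatrix G i).IsSymm :=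
  Matrix.IsSymm.ext fun u v => by simp only [distMatrix, of_apply, SimpleGraph.dist_comm]

theorem ip_self_nonneg_of_isSymm {M : Matrix (Fin n) (Fin n) ℝ} (hM : M.IsSymm) : 0 ≤ ip M M := by
  have hMM : M * M = M * Mᴴ := by rw [conjTranspose_eq_transpose_of_trivial, hM.eq]
  exact mul_nonneg (by positivity) (hMM ▸ (posSemidef_self_mul_conjTranspose M).trace_nonneg)

theorem trace_mul_distMatrix (G : SimpleGraph (Fin n)) (i : ℕ) (M : Matrix (Fin n) (Fin n) ℝ) :
    (M * distMatrix G i).trace = ∑ u, ∑ v, if G.dist u v = i then M u v else 0 := by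
  simp only [trace, Matrix.diag, mul_apply, distMatrix, of_apply, SimpleGraph.dist_comm, mul_ite,
    mul_one, mul_zero]

theorem ip_aeval_adjMatrix_distMatrix (G : SimpleGraph (Fin n)) [DecidableRel G.Adj] {p : ℝ[X]}
    {i : ℕ} (hp : p.natDegree = i) :
    ip (aeval (G.adjMatrix ℝ) p) (distMatrix G i) =
      p.leadingCoeff * ip (G.adjMatrix ℝ ^ i) (distMatrix G i) := by
  have htrace : (aeval (G.adjMatrix ℝ) p * distMatrix G i).trace =
      p.leadingCoeff * (G.adjMatrix ℝ ^ i * distMatrix G i).trace := by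
    simp only [trace_mul_distMatrix, mul_sum, mul_ite, mul_zero]
    refine sum_congr rfl fun u _ => sum_congr rfl fun v _ =>
      if_ctx_congr Iff.rfl (fun hd => ?_) fun _ => rfl
    rw [G.aeval_adjMatrix_apply_of_natDegree_le_dist (hp.trans hd.symm).le, hd, ← hp,
      coeff_natDegree]
  rw [ip, ip, htrace, mul_left_comm]

theorem avg_shortest_paths_of_punctually_distance_regular_general
    {n i : ℕ} (G : SimpleGraph (Fin n)) [DecidableRel G.Adj]
    (lam0 : ℝ)
    (p : Polynomial ℝ) (hdeg : p.natDegree = i) (ω : ℝ) (hω : p.leadingCoeff = ω) (hωne : ω ≠ 0)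
    (hpnorm : ip (Polynomial.aeval (G.adjMatrix ℝ) p) (Polynomial.aeval (G.adjMatrix ℝ) p)
      = p.eval lam0)
    (δbar Pbar : ℝ) (hδ : δbar = ip (distMatrix G i) (distMatrix G i))
    (hPbar : Pbar = ip ((G.adjMatrix ℝ) ^ i) (distMatrix G i))
    (hpdr : Polynomial.aeval (G.adjMatrix ℝ) p = distMatrix G i) :
    ω * Pbar = Real.sqrt (p.eval lam0 * δbar) ∧
    Pbar = (1 / ω) * Real.sqrt (p.eval lam0 * δbar) := by
  have hωP : ω * Pbar = δbar := by
    rw [hPbar, hδ, ← hω, ← ip_aeval_adjMatrix_distMatrix G hdeg, hpdr]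
  have hδ_eval : δbar = p.eval lam0 := by rw [hδ, ← hpdr, hpnorm]
  have hδ_nonneg : 0 ≤ δbar := hδ ▸ ip_self_nonneg_of_isSymm (distMatrix_isSymm G i)
  have hsqrt : Real.sqrt (p.eval lam0 * δbar) = δbar := by
    rw [← hδ_eval, Real.sqrt_mul_self hδ_nonneg]
  refine ⟨by rw [hsqrt, hωP], ?_⟩
  rw [hsqrt, ← hωP]
  field_simp

/-- If `p_i(A) = A_i` then `ω_i · P̄_i = sqrt(p_i(λ0) · δ̄_i)`, i.e.
`P̄_i = (1/ω_i)·sqrt(p_i(λ0)·δ̄_i)`, where `P̄_i = ⟨A^i, A_i⟩` is the average number of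
shortest `i`-paths from a vertex and `ω_i` is the leading coefficient of `p_i`. -/
theorem avg_shortest_paths_of_punctually_distance_regular
    {n d i : ℕ} (hn : 0 < n) (G : SimpleGraph (Fin n)) [DecidableRel G.Adj]
    (hconn : G.Connected) (δ : ℕ) (hreg : G.IsRegularOfDegree δ)
    (hdiam : G.diam = d) (hi : i ≤ d)
    (lam0 : ℝ) (hlam0 : lam0 = (δ : ℝ))
    (p : Polynomial ℝ) (hdeg : p.natDegree = i) (ω : ℝ) (hω : p.leadingCoeff = ω) (hωne : ω ≠ 0)
    (hpnorm : ip (Polynomial.aeval (G.adjMatrix ℝ) p) (Polynomial.aeval (G.adjMatrix ℝ) p)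
      = p.eval lam0)
    (δbar Pbar : ℝ) (hδ : δbar = ip (distMatrix G i) (distMatrix G i))
    (hPbar : Pbar = ip ((G.adjMatrix ℝ) ^ i) (distMatrix G i))
    (hpdr : Polynomial.aeval (G.adjMatrix ℝ) p = distMatrix G i) :
    ω * Pbar = Real.sqrt (p.eval lam0 * δbar) ∧
    Pbar = (1 / ω) * Real.sqrt (p.eval lam0 * δbar) :=
  avg_shortest_paths_of_punctually_distance_regular_general G lam0 p hdeg ω hω hωne hpnorm δbar Pbar
    hδ hPbar hpdr
end

section
/- For any connected regular graph with D = d, the orthogonal projection of the idempotent E_j onto the span of the distance matrices is Ê_j = Σ_{i=0}^{D} m̄_{ij} A_i, and consequently Σ_{i=0}^{D} δ̄_i·m̄_{ij}² ≤ m̄_j, with equality if and only if E_j ∘ A_i = m̄_{ij} A_i for all i (j-punctual eigenspace distance-regularity). -/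
open Matrix Polynomial Finset

lemma ip_sum_form {n : ℕ} (R S : Matrix (Fin n) (Fin n) ℝ) :
    ip R S = (1 / (n:ℝ)) * ∑ u, ∑ v, R u v * S v u := by
  simp [ip, Matrix.trace, Matrix.diag, Matrix.mul_apply]

lemma ip_comm {n : ℕ} (R S : Matrix (Fin n) (Fin n) ℝ) : ip R S = ip S R := by
  unfold ip; rw [Matrix.trace_mul_comm]

lemma ip_sub {n : ℕ} (R T S : Matrix (Fin n) (Fin n) ℝ) :
    ip (R - T) S = ip R S - ip T S := by
  simp [ip, Matrix.sub_mul, mul_sub]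

lemma ip_suml {n : ℕ} {ι : Type*} (s : Finset ι) (f : ι → Matrix (Fin n) (Fin n) ℝ)
    (S : Matrix (Fin n) (Fin n) ℝ) :
    ip (∑ i ∈ s, f i) S = ∑ i ∈ s, ip (f i) S := by
  simp [ip, Finset.sum_mul, Finset.mul_sum]

lemma ip_smul {n : ℕ} (c : ℝ) (R S : Matrix (Fin n) (Fin n) ℝ) :
    ip (c • R) S = c * ip R S := by
  simp [ip, Matrix.smul_mul, mul_left_comm]

lemma exists_dist_all {n d : ℕ} (hn : 0 < n) (G : SimpleGraph (Fin n))
    (hconn : G.Connected) (hdiam : G.diam = d) :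
    (∀ u v : Fin n, G.dist u v ≤ d) ∧ (∀ k ≤ d, ∃ u v : Fin n, G.dist u v = k) := by
  haveI : Nonempty (Fin n) := ⟨⟨0, hn⟩⟩
  have hediam : G.ediam ≠ ⊤ := by
    intro h
    obtain ⟨u, v, huv⟩ := SimpleGraph.exists_edist_eq_ediam_of_finite (G := G)
    rw [h] at huv
    exact (SimpleGraph.edist_ne_top_iff_reachable.mpr (hconn.preconnected u v)) huv
  have hle : ∀ u v : Fin n, G.dist u v ≤ d := fun u v =>
    hdiam ▸ SimpleGraph.dist_le_diam hediam
  refine ⟨hle, ?_⟩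
  have key : ∀ m : ℕ, ∀ u v : Fin n, G.dist u v = m → ∀ k ≤ m, ∃ x y, G.dist x y = k := by
    intro m
    induction m with
    | zero =>
      intro u v _ k hk
      have : k = 0 := Nat.le_zero.mp hk
      exact ⟨u, u, by simp [this]⟩
    | succ m ih =>
      intro u v hm k hk
      rcases Nat.lt_or_ge k (m+1) with h | h
      · obtain ⟨p, hp⟩ := hconn.exists_walk_length_eq_dist u v
        rw [hm] at hp
        cases p with
        | nil => simp at hp
        | @cons _ w _ hadj q =>
          have hq : q.length = m := by simpa using hp
          have h1 : G.dist w v ≤ m := hq ▸ SimpleGraph.dist_le q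
          have h2 : G.dist u v ≤ G.dist u w + G.dist w v := hconn.dist_triangle
          have h3 : G.dist u w = 1 := SimpleGraph.dist_eq_one_iff_adj.mpr hadj
          have h4 : G.dist w v = m := by omega
          exact ih w v h4 k (by omega)
      · exact ⟨u, v, by omega⟩
  obtain ⟨u, v, huv⟩ := SimpleGraph.exists_dist_eq_diam (G := G)
  rw [hdiam] at huv
  exact key d u v huv

/-- The orthogonal projection of the idempotent `E_j` onto the span of the distance
matrices is `Ê_j = Σ_i m̄_{ij} A_i`, and consequently `Σ_i δ̄_i m̄_{ij}² ≤ m̄_j`, with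
equality iff `E_j ∘ A_i = m̄_{ij} A_i` for all `i`. -/
theorem projection_of_idempotent_and_dual_excess_bound
    {n d : ℕ} (hn : 0 < n) (G : SimpleGraph (Fin n)) [DecidableRel G.Adj]
    (hconn : G.Connected) (δ : ℕ) (hreg : G.IsRegularOfDegree δ)
    (hdiam : G.diam = d)
    (lamj : ℝ) (E : Matrix (Fin n) (Fin n) ℝ)
    (hEsym : Eᵀ = E) (hEidem : E * E = E)
    (hAE : G.adjMatrix ℝ * E = lamj • E) :
    (∀ k ≤ d,
      ip (E - ∑ i ∈ Finset.range (d + 1), mbar G E i • distMatrix G i) (distMatrix G k) = 0) ∧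
    (∑ i ∈ Finset.range (d + 1),
        ip (distMatrix G i) (distMatrix G i) * (mbar G E i) ^ 2 ≤ ip E E) ∧
    ((∑ i ∈ Finset.range (d + 1),
        ip (distMatrix G i) (distMatrix G i) * (mbar G E i) ^ 2 = ip E E) ↔
      ∀ i ≤ d, Matrix.hadamard E (distMatrix G i) = mbar G E i • distMatrix G i) := by
  haveI : Nonempty (Fin n) := ⟨⟨0, hn⟩⟩
  obtain ⟨hle, hex⟩ := exists_dist_all hn G hconn hdiam
  have hnR : (0:ℝ) < (n:ℝ) := by exact_mod_cast hn
  have hn' : (0:ℝ) < 1 / (n:ℝ) := by positivity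
  set A : ℕ → Matrix (Fin n) (Fin n) ℝ := distMatrix G with hA
  have hAapp : ∀ (i : ℕ) (u v : Fin n), A i u v = if G.dist u v = i then 1 else 0 :=
    fun i u v => rfl
  have ipdist : ∀ (R : Matrix (Fin n) (Fin n) ℝ) (i : ℕ),
      ip R (A i) = (1 / (n:ℝ)) * ∑ u, ∑ v, R u v * A i u v := by
    intro R i
    rw [ip_sum_form]
    congr 1
    refine Finset.sum_congr rfl fun u _ => Finset.sum_congr rfl fun v _ => ?_
    rw [hAapp, hAapp, SimpleGraph.dist_comm]
  have orth : ∀ i k : ℕ, i ≠ k → ip (A i) (A k) = 0 := by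
    intro i k hik
    rw [ipdist, mul_eq_zero]
    right
    refine Finset.sum_eq_zero fun u _ => Finset.sum_eq_zero fun v _ => ?_
    rw [hAapp, hAapp]
    by_cases h : G.dist u v = i
    · simp [h, hik]
    · simp [h]
  have delta_pos : ∀ k ≤ d, 0 < ip (A k) (A k) := by
    intro k hk
    obtain ⟨u₀, v₀, h₀⟩ := hex k hk
    rw [ipdist]
    apply mul_pos hn'
    apply Finset.sum_pos'
    · exact fun u _ => Finset.sum_nonneg fun v _ => mul_self_nonneg _
    · refine ⟨u₀, Finset.mem_univ _, ?_⟩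
      apply Finset.sum_pos'
      · exact fun v _ => mul_self_nonneg _
      · exact ⟨v₀, Finset.mem_univ _, by rw [hAapp]; simp [h₀]⟩
  set Ehat : Matrix (Fin n) (Fin n) ℝ :=
    ∑ i ∈ Finset.range (d + 1), mbar G E i • A i with hEhat
  have ipEA : ∀ i ≤ d, ip E (A i) = mbar G E i * ip (A i) (A i) := by
    intro i hi
    rw [mbar, div_mul_cancel₀]
    exact (delta_pos i hi).ne'
  have part1 : ∀ k ≤ d, ip (E - Ehat) (A k) = 0 := by
    intro k hk
    rw [ip_sub, hEhat, ip_suml]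
    have hs : ∑ i ∈ Finset.range (d+1), ip (mbar G E i • A i) (A k)
        = mbar G E k * ip (A k) (A k) := by
      rw [Finset.sum_eq_single k]
      · rw [ip_smul]
      · intro i _ hik
        rw [ip_smul, orth i k hik, mul_zero]
      · intro h
        exact absurd (Finset.mem_range.mpr (by omega)) h
    rw [hs, ipEA k hk, sub_self]
  set F : Matrix (Fin n) (Fin n) ℝ := E - Ehat with hF
  have hEsym' : ∀ u v : Fin n, E v u = E u v := by
    intro u v
    conv_lhs => rw [← hEsym]
    rfl
  have hFsymm : ∀ u v : Fin n, F v u = F u v := by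
    intro u v
    simp only [hF, hEhat, Matrix.sub_apply, Matrix.sum_apply, Matrix.smul_apply, smul_eq_mul]
    rw [hEsym']
    congr 1
    refine Finset.sum_congr rfl fun i _ => ?_
    rw [hAapp, hAapp, SimpleGraph.dist_comm]
  have hFF : ip F F = (1 / (n:ℝ)) * ∑ u, ∑ v, (F u v)^2 := by
    rw [ip_sum_form]
    congr 1
    refine Finset.sum_congr rfl fun u _ => Finset.sum_congr rfl fun v _ => ?_
    rw [hFsymm u v, sq]
  have hFFnonneg : 0 ≤ ip F F := by
    rw [hFF]
    exact mul_nonneg hn'.le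
      (Finset.sum_nonneg fun u _ => Finset.sum_nonneg fun v _ => sq_nonneg _)
  have hEhatF : ip Ehat F = 0 := by
    rw [hEhat, ip_suml]
    refine Finset.sum_eq_zero fun i hi => ?_
    have hi' : i ≤ d := Nat.lt_succ_iff.mp (Finset.mem_range.mp hi)
    rw [ip_smul, ip_comm, hF, part1 i hi', mul_zero]
  have hEhatE : ip Ehat E = ∑ i ∈ Finset.range (d+1), ip (A i) (A i) * (mbar G E i)^2 := by
    rw [hEhat, ip_suml]
    refine Finset.sum_congr rfl fun i hi => ?_
    have hi' : i ≤ d := Nat.lt_succ_iff.mp (Finset.mem_range.mp hi)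
    rw [ip_smul, ip_comm, ipEA i hi']
    ring
  have keyid : ip F F = ip E E
      - ∑ i ∈ Finset.range (d+1), ip (A i) (A i) * (mbar G E i)^2 := by
    have e1 : ip F F = ip E F - ip Ehat F := by rw [← ip_sub, ← hF]
    have e2 : ip E F = ip F E := ip_comm E F
    have e3 : ip F E = ip E E - ip Ehat E := by rw [hF, ip_sub]
    rw [e1, e2, e3, hEhatF, hEhatE, sub_zero]
  have hsum_eval : ∀ u v : Fin n, Ehat u v = mbar G E (G.dist u v) := by
    intro u v
    rw [hEhat]
    simp only [Matrix.sum_apply, Matrix.smul_apply, smul_eq_mul, hAapp,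
      mul_ite, mul_one, mul_zero]
    rw [Finset.sum_ite_eq]
    exact if_pos (Finset.mem_range.mpr (Nat.lt_succ_of_le (hle u v)))
  have hhad : (E = Ehat) ↔
      ∀ i ≤ d, Matrix.hadamard E (A i) = mbar G E i • A i := by
    constructor
    · intro h i hi
      ext u v
      rw [Matrix.hadamard_apply, Matrix.smul_apply, smul_eq_mul, hAapp]
      by_cases hd : G.dist u v = i
      · have hE' : E u v = Ehat u v := congrFun (congrFun h u) v
        have : E u v = mbar G E i := by rw [hE', hsum_eval, hd]
        simp [hd, this]
      · simp [hd]
    · intro h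
      ext u v
      have hi : G.dist u v ≤ d := hle u v
      have := congrFun (congrFun (h (G.dist u v) hi) u) v
      rw [Matrix.hadamard_apply, Matrix.smul_apply, smul_eq_mul, hAapp] at this
      simp at this
      rw [this, hsum_eval]
  have hFzero : ip F F = 0 ↔ E = Ehat := by
    rw [hFF, mul_eq_zero]
    constructor
    · rintro (h | h)
      · exact absurd h hn'.ne'
      · have h1 := (Finset.sum_eq_zero_iff_of_nonneg
          (fun u _ => Finset.sum_nonneg fun v _ => sq_nonneg (F u v))).mp h
        ext u v
        have h2 := (Finset.sum_eq_zero_iff_of_nonneg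
          (fun v _ => sq_nonneg (F u v))).mp (h1 u (Finset.mem_univ u)) v (Finset.mem_univ v)
        have h3 : F u v = 0 := by
          exact pow_eq_zero_iff (by norm_num) |>.mp h2
        have h4 : E u v - Ehat u v = 0 := h3
        linarith
    · intro h
      right
      refine Finset.sum_eq_zero fun u _ => Finset.sum_eq_zero fun v _ => ?_
      have : F u v = 0 := by
        show E u v - Ehat u v = 0
        rw [h, sub_self]
      rw [this]
      ring
  refine ⟨part1, by linarith, ?_⟩
  constructor
  · intro hS
    have : ip F F = 0 := by linarith
    exact hhad.mp (hFzero.mp this)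
  · intro h
    have : ip F F = 0 := hFzero.mpr (hhad.mpr h)
    linarith
end

section
/- For a graph with D = d, the partial sum value s_i(λ0) is at most the harmonic mean of the i-neighborhood sizes: s_i(λ0) ≤ n / Σ_{u∈V} |N_i(u)|^{-1}, and equality holds if and only if s_i(A) = S_i. -/
open Matrix Polynomial Finset

lemma aux_pow_zero {n : ℕ} (G : SimpleGraph (Fin n)) [DecidableRel G.Adj]
    (k : ℕ) (u v : Fin n) (h : k < G.dist u v) : ((G.adjMatrix ℝ) ^ k) u v = 0 := by
  rw [SimpleGraph.adjMatrix_pow_apply_eq_card_walk]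
  have : IsEmpty { p : G.Walk u v | p.length = k } := by
    constructor; rintro ⟨w, hw⟩
    simp only [Set.mem_setOf_eq] at hw
    have := SimpleGraph.dist_le w
    omega
  rw [Fintype.card_eq_zero, Nat.cast_zero]

lemma aux_aeval_zero {n : ℕ} (G : SimpleGraph (Fin n)) [DecidableRel G.Adj]
    (q : Polynomial ℝ) {i : ℕ} (hq : q.natDegree ≤ i) (u v : Fin n) (h : i < G.dist u v) :
    (Polynomial.aeval (G.adjMatrix ℝ) q) u v = 0 := by
  rw [Polynomial.aeval_eq_sum_range]
  rw [Matrix.sum_apply]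
  refine Finset.sum_eq_zero fun k hk => ?_
  rw [Finset.mem_range, Nat.lt_succ_iff] at hk
  rw [Matrix.smul_apply, aux_pow_zero G k u v (by omega), smul_zero]

lemma aux_pow_row {n : ℕ} (G : SimpleGraph (Fin n)) [DecidableRel G.Adj]
    {δ : ℕ} (hreg : G.IsRegularOfDegree δ) (k : ℕ) (u : Fin n) :
    ∑ v, ((G.adjMatrix ℝ) ^ k) u v = (δ : ℝ) ^ k := by
  induction k generalizing u with
  | zero => simp [Matrix.one_apply]
  | succ k ih =>
    rw [pow_succ]
    simp only [Matrix.mul_apply]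
    rw [Finset.sum_comm]
    have : ∀ w : Fin n, ∑ v, ((G.adjMatrix ℝ) ^ k) u w * (G.adjMatrix ℝ) w v
        = ((G.adjMatrix ℝ) ^ k) u w * (δ : ℝ) := by
      intro w
      rw [← Finset.mul_sum]
      congr 1
      have h2 := SimpleGraph.adjMatrix_mulVec_const_apply_of_regular (α := ℝ) (a := 1) hreg
        (v := w)
      simp only [Matrix.mulVec, dotProduct, Function.const_apply, mul_one] at h2
      rw [h2]
    rw [Finset.sum_congr rfl fun w _ => this w, ← Finset.sum_mul, ih u, pow_succ]

lemma aux_aeval_row {n : ℕ} (G : SimpleGraph (Fin n)) [DecidableRel G.Adj]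
    {δ : ℕ} (hreg : G.IsRegularOfDegree δ) (q : Polynomial ℝ) (u : Fin n) :
    ∑ v, (Polynomial.aeval (G.adjMatrix ℝ) q) u v = q.eval (δ : ℝ) := by
  rw [Polynomial.aeval_eq_sum_range, Polynomial.eval_eq_sum_range]
  simp only [Matrix.sum_apply, Matrix.smul_apply, smul_eq_mul]
  rw [Finset.sum_comm]
  exact Finset.sum_congr rfl fun k _ => by rw [← Finset.mul_sum, aux_pow_row G hreg k u]

lemma aux_aeval_symm {n : ℕ} (G : SimpleGraph (Fin n)) [DecidableRel G.Adj]
    (q : Polynomial ℝ) (u v : Fin n) :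
    (Polynomial.aeval (G.adjMatrix ℝ) q) u v = (Polynomial.aeval (G.adjMatrix ℝ) q) v u := by
  have : (Polynomial.aeval (G.adjMatrix ℝ) q)ᵀ = Polynomial.aeval (G.adjMatrix ℝ) q := by
    rw [Polynomial.aeval_eq_sum_range]
    rw [Matrix.transpose_sum]
    refine Finset.sum_congr rfl fun k _ => ?_
    rw [Matrix.transpose_smul, Matrix.transpose_pow, SimpleGraph.transpose_adjMatrix]
  conv_lhs => rw [← this]
  rfl

lemma aux_pow_spec {n d : ℕ} (A : Matrix (Fin n) (Fin n) ℝ) (lam : ℕ → ℝ)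
    (E : ℕ → Matrix (Fin n) (Fin n) ℝ)
    (hEmul : ∀ j ≤ d, ∀ k ≤ d, E j * E k = if j = k then E j else 0)
    (hEsum : ∑ j ∈ Finset.range (d + 1), E j = 1)
    (hAE : A = ∑ j ∈ Finset.range (d + 1), lam j • E j) (k : ℕ) :
    A ^ k = ∑ t ∈ Finset.range (d + 1), (lam t) ^ k • E t := by
  induction k with
  | zero => simp [hEsum]
  | succ k ih =>
    rw [pow_succ, ih, hAE, Finset.sum_mul_sum]
    refine Finset.sum_congr rfl fun t ht => ?_
    rw [Finset.mem_range, Nat.lt_succ_iff] at ht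
    rw [Finset.sum_eq_single t]
    · rw [Matrix.smul_mul, Matrix.mul_smul, hEmul t ht t ht, if_pos rfl, smul_smul, mul_comm,
        ← pow_succ']
    · intro j hj hne
      rw [Finset.mem_range, Nat.lt_succ_iff] at hj
      rw [Matrix.smul_mul, Matrix.mul_smul, hEmul t ht j hj, if_neg (Ne.symm hne), smul_zero,
        smul_zero]
    · intro h; exact absurd (Finset.mem_range.mpr (Nat.lt_succ_of_le ht)) h

lemma aux_aeval_spec {n d : ℕ} (A : Matrix (Fin n) (Fin n) ℝ) (lam : ℕ → ℝ)
    (E : ℕ → Matrix (Fin n) (Fin n) ℝ)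
    (hEmul : ∀ j ≤ d, ∀ k ≤ d, E j * E k = if j = k then E j else 0)
    (hEsum : ∑ j ∈ Finset.range (d + 1), E j = 1)
    (hAE : A = ∑ j ∈ Finset.range (d + 1), lam j • E j) (q : Polynomial ℝ) :
    Polynomial.aeval A q = ∑ t ∈ Finset.range (d + 1), q.eval (lam t) • E t := by
  rw [Polynomial.aeval_eq_sum_range]
  rw [Finset.sum_congr rfl (fun k _ => by
    rw [aux_pow_spec A lam E hEmul hEsum hAE k, Finset.smul_sum])]
  rw [Finset.sum_comm]
  refine Finset.sum_congr rfl fun t _ => ?_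
  rw [Polynomial.eval_eq_sum_range, Finset.sum_smul]
  exact Finset.sum_congr rfl fun k _ => by rw [smul_smul]

lemma aux_trace_mul {n d : ℕ} (A : Matrix (Fin n) (Fin n) ℝ) (lam m : ℕ → ℝ)
    (E : ℕ → Matrix (Fin n) (Fin n) ℝ)
    (hEmul : ∀ j ≤ d, ∀ k ≤ d, E j * E k = if j = k then E j else 0)
    (hEsum : ∑ j ∈ Finset.range (d + 1), E j = 1)
    (hAE : A = ∑ j ∈ Finset.range (d + 1), lam j • E j)
    (htr : ∀ j ≤ d, (E j).trace = m j) (q r : Polynomial ℝ) :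
    (Polynomial.aeval A q * Polynomial.aeval A r).trace
      = ∑ t ∈ Finset.range (d + 1), m t * q.eval (lam t) * r.eval (lam t) := by
  rw [aux_aeval_spec A lam E hEmul hEsum hAE q, aux_aeval_spec A lam E hEmul hEsum hAE r,
    Finset.sum_mul_sum]
  rw [Matrix.trace_sum]
  refine Finset.sum_congr rfl fun t ht => ?_
  rw [Finset.mem_range, Nat.lt_succ_iff] at ht
  rw [Matrix.trace_sum, Finset.sum_eq_single t]
  · rw [Matrix.smul_mul, Matrix.mul_smul, hEmul t ht t ht, if_pos rfl, Matrix.trace_smul,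
      Matrix.trace_smul, htr t ht, smul_eq_mul, smul_eq_mul]; ring
  · intro j hj hne
    rw [Finset.mem_range, Nat.lt_succ_iff] at hj
    rw [Matrix.smul_mul, Matrix.mul_smul, hEmul t ht j hj, if_neg (Ne.symm hne), smul_zero,
      smul_zero, Matrix.trace_zero]
  · intro h; exact absurd (Finset.mem_range.mpr (Nat.lt_succ_of_le ht)) h

lemma aux_trace_one {n d : ℕ} (A : Matrix (Fin n) (Fin n) ℝ) (lam m : ℕ → ℝ)
    (E : ℕ → Matrix (Fin n) (Fin n) ℝ)
    (hEmul : ∀ j ≤ d, ∀ k ≤ d, E j * E k = if j = k then E j else 0)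
    (hEsum : ∑ j ∈ Finset.range (d + 1), E j = 1)
    (hAE : A = ∑ j ∈ Finset.range (d + 1), lam j • E j)
    (htr : ∀ j ≤ d, (E j).trace = m j) (q : Polynomial ℝ) :
    (Polynomial.aeval A q).trace = ∑ t ∈ Finset.range (d + 1), m t * q.eval (lam t) := by
  rw [aux_aeval_spec A lam E hEmul hEsum hAE q, Matrix.trace_sum]
  refine Finset.sum_congr rfl fun t ht => ?_
  rw [Finset.mem_range, Nat.lt_succ_iff] at ht
  rw [Matrix.trace_smul, htr t ht, smul_eq_mul, mul_comm]

lemma aux_const_of_adj {n : ℕ} {G : SimpleGraph (Fin n)} (hconn : G.Connected)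
    (f : Fin n → ℝ) (h : ∀ u v, G.Adj u v → f u = f v) (u v : Fin n) : f u = f v := by
  obtain ⟨w⟩ := hconn.preconnected u v
  induction w with
  | nil => rfl
  | cons h' _ ih => exact (h _ _ h').trans ih

/-- `s_i(λ0)` is at most the harmonic mean of the `i`-neighborhood sizes:
`s_i(λ0) ≤ n / Σ_u |N_i(u)|⁻¹`, with equality iff `s_i(A) = S_i`. -/
theorem partial_sum_le_harmonic_mean
    {n d i : ℕ} (hn : 0 < n) (G : SimpleGraph (Fin n)) [DecidableRel G.Adj]
    (hconn : G.Connected) (δ : ℕ) (hreg : G.IsRegularOfDegree δ)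
    (hdiam : G.diam = d) (hi : i ≤ d)
    (lam : ℕ → ℝ) (hlam : StrictAntiOn lam (Set.Iic d)) (hlam0 : lam 0 = (δ : ℝ))
    (m : ℕ → ℝ) (hm : ∀ j ≤ d, 0 < m j)
    (E : ℕ → Matrix (Fin n) (Fin n) ℝ)
    (hEsym : ∀ j ≤ d, (E j)ᵀ = E j)
    (hEmul : ∀ j ≤ d, ∀ k ≤ d, E j * E k = if j = k then E j else 0)
    (hEsum : ∑ j ∈ Finset.range (d + 1), E j = 1)
    (hAE : G.adjMatrix ℝ = ∑ j ∈ Finset.range (d + 1), lam j • E j)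
    (htr : ∀ j ≤ d, (E j).trace = m j)
    (p : ℕ → Polynomial ℝ) (hpdeg : ∀ k ≤ d, (p k).natDegree = k) (hpne : ∀ k ≤ d, p k ≠ 0)
    (horth : ∀ k ≤ d, ∀ l ≤ d,
      (1 / (n : ℝ)) * ∑ t ∈ Finset.range (d + 1),
          m t * (p k).eval (lam t) * (p l).eval (lam t)
        = if k = l then (p k).eval (lam 0) else 0) :
    (∑ k ∈ Finset.range (i + 1), p k).eval (lam 0)
        ≤ (n : ℝ) / ∑ u : Fin n,
            ((Finset.univ.filter fun v => G.dist u v ≤ i).card : ℝ)⁻¹ ∧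
    ((∑ k ∈ Finset.range (i + 1), p k).eval (lam 0)
        = (n : ℝ) / ∑ u : Fin n,
            ((Finset.univ.filter fun v => G.dist u v ≤ i).card : ℝ)⁻¹ ↔
      Polynomial.aeval (G.adjMatrix ℝ) (∑ k ∈ Finset.range (i + 1), p k)
        = ballMatrix G i) := by
  have hnR : (0 : ℝ) < n := by exact_mod_cast hn
  have hnne : (n : ℝ) ≠ 0 := hnR.ne'
  set A := G.adjMatrix ℝ with hA
  set s : Polynomial ℝ := ∑ k ∈ Finset.range (i + 1), p k with hs
  set B := Polynomial.aeval A s with hB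
  set c : ℝ := s.eval (lam 0) with hc
  set filt : Fin n → Finset (Fin n) :=
    fun u => Finset.univ.filter fun v => G.dist u v ≤ i with hfilt
  set N : Fin n → ℕ := fun u => (filt u).card with hN
  set T : ℝ := ∑ u : Fin n, ((N u : ℝ))⁻¹ with hT
  -- basic facts
  have hsum_m : ∑ t ∈ Finset.range (d + 1), m t = (n : ℝ) := by
    have h1 := congrArg Matrix.trace hEsum
    rw [Matrix.trace_sum, Matrix.trace_one, Fintype.card_fin] at h1
    rw [← h1]
    exact Finset.sum_congr rfl fun t ht =>
      (htr t (Nat.lt_succ_iff.mp (Finset.mem_range.mp ht))).symm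
  have hp0 : p 0 = Polynomial.C 1 := by
    obtain ⟨a, ha⟩ := Polynomial.natDegree_eq_zero.mp (hpdeg 0 (Nat.zero_le d))
    have hane : a ≠ 0 := by
      rintro rfl; exact hpne 0 (Nat.zero_le d) (by rw [← ha, map_zero])
    have h00 := horth 0 (Nat.zero_le d) 0 (Nat.zero_le d)
    rw [if_pos rfl, ← ha] at h00
    simp only [Polynomial.eval_C] at h00
    have hsum : ∑ t ∈ Finset.range (d + 1), m t * a * a
        = (∑ t ∈ Finset.range (d + 1), m t) * a * a := by
      rw [Finset.sum_mul, Finset.sum_mul]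
    rw [hsum, hsum_m] at h00
    have h2 : a * a = a := by
      have e : 1 / (n : ℝ) * ((n : ℝ) * a * a) = a * a := by
        field_simp
      rw [e] at h00; exact h00
    have ha1 : a = 1 := mul_left_cancel₀ hane (by rw [mul_one, h2])
    rw [← ha, ha1]
  have horth' : ∀ k ≤ d, ∀ l ≤ d,
      ∑ t ∈ Finset.range (d + 1), m t * (p k).eval (lam t) * (p l).eval (lam t)
        = (n : ℝ) * (if k = l then (p k).eval (lam 0) else 0) := by
    intro k hk l hl
    rw [← horth k hk l hl]
    field_simp
  have heval_pos : ∀ k ≤ d, 0 < (p k).eval (lam 0) := by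
    intro k hk
    have hkk := horth k hk k hk
    rw [if_pos rfl] at hkk
    have hex : ∃ t ∈ Finset.range (d + 1), (p k).eval (lam t) ≠ 0 := by
      by_contra hall
      push_neg at hall
      apply hpne k hk
      apply Polynomial.eq_zero_of_natDegree_lt_card_of_eval_eq_zero' (p k)
        ((Finset.range (d + 1)).image lam)
      · intro x hx
        obtain ⟨t, ht, rfl⟩ := Finset.mem_image.mp hx
        exact hall t ht
      · rw [Finset.card_image_of_injOn, Finset.card_range]
        · rw [hpdeg k hk]; omega
        · intro t1 h1 t2 h2 he
          rw [Finset.mem_coe, Finset.mem_range, Nat.lt_succ_iff] at h1 h2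
          exact hlam.injOn h1 h2 he
    obtain ⟨t0, ht0, hne0⟩ := hex
    have hpos : 0 < ∑ t ∈ Finset.range (d + 1),
        m t * (p k).eval (lam t) * (p k).eval (lam t) := by
      apply Finset.sum_pos'
      · intro t ht
        rw [Finset.mem_range, Nat.lt_succ_iff] at ht
        have h1 := (hm t ht).le
        nlinarith [sq_nonneg ((p k).eval (lam t))]
      · refine ⟨t0, ht0, ?_⟩
        rw [Finset.mem_range, Nat.lt_succ_iff] at ht0
        have h1 := hm t0 ht0
        have h2 := mul_self_pos.mpr hne0
        nlinarith
    rw [← hkk]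
    exact mul_pos (by positivity) hpos
  have hc_pos : 0 < c := by
    rw [hc, hs, Polynomial.eval_finset_sum]
    apply Finset.sum_pos
    · intro k hk
      exact heval_pos k (le_trans (Nat.lt_succ_iff.mp (Finset.mem_range.mp hk)) hi)
    · exact ⟨0, Finset.mem_range.mpr (Nat.succ_pos i)⟩
  have hsdeg : s.natDegree ≤ i := by
    rw [hs]
    apply Polynomial.natDegree_sum_le_of_forall_le
    intro k hk
    have hk' := Nat.lt_succ_iff.mp (Finset.mem_range.mp hk)
    rw [hpdeg k (le_trans hk' hi)]
    exact hk'
  -- trace facts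
  have htrB : B.trace = (n : ℝ) := by
    rw [hB, aux_trace_one A lam m E hEmul hEsum hAE htr s]
    rw [Finset.sum_congr rfl fun t _ => by
      rw [hs, Polynomial.eval_finset_sum, Finset.mul_sum]]
    rw [Finset.sum_comm]
    have h3 : ∀ k ∈ Finset.range (i + 1),
        ∑ t ∈ Finset.range (d + 1), m t * (p k).eval (lam t)
          = if k = 0 then (n : ℝ) else 0 := by
      intro k hk
      have hk' : k ≤ d := le_trans (Nat.lt_succ_iff.mp (Finset.mem_range.mp hk)) hi
      have h4 := horth' k hk' 0 (Nat.zero_le d)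
      simp only [hp0, Polynomial.eval_C, mul_one] at h4
      by_cases hk0 : k = 0
      · subst hk0
        rw [h4, if_pos rfl, if_pos rfl, hp0, Polynomial.eval_C, mul_one]
      · rw [h4, if_neg hk0, if_neg hk0, mul_zero]
    rw [Finset.sum_congr rfl h3, Finset.sum_ite_eq' (Finset.range (i + 1)) 0 fun _ => (n : ℝ),
      if_pos (Finset.mem_range.mpr (Nat.succ_pos i))]
  have htrB2 : (B * B).trace = (n : ℝ) * c := by
    rw [hB, aux_trace_mul A lam m E hEmul hEsum hAE htr s s]
    have h2 : ∀ t, m t * Polynomial.eval (lam t) s * Polynomial.eval (lam t) s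
        = ∑ k ∈ Finset.range (i + 1), ∑ l ∈ Finset.range (i + 1),
            m t * (p k).eval (lam t) * (p l).eval (lam t) := by
      intro t
      rw [hs, Polynomial.eval_finset_sum, mul_assoc, Finset.sum_mul_sum, Finset.mul_sum]
      refine Finset.sum_congr rfl fun k _ => ?_
      rw [Finset.mul_sum]
      exact Finset.sum_congr rfl fun l _ => by ring
    rw [Finset.sum_congr rfl fun t _ => h2 t]
    rw [Finset.sum_comm]
    have h4 : ∀ k ∈ Finset.range (i + 1),
        ∑ t ∈ Finset.range (d + 1), ∑ l ∈ Finset.range (i + 1),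
          m t * (p k).eval (lam t) * (p l).eval (lam t)
        = (n : ℝ) * (p k).eval (lam 0) := by
      intro k hk
      have hk' : k ≤ d := le_trans (Nat.lt_succ_iff.mp (Finset.mem_range.mp hk)) hi
      rw [Finset.sum_comm]
      rw [Finset.sum_congr rfl fun l hl => horth' k hk' l
        (le_trans (Nat.lt_succ_iff.mp (Finset.mem_range.mp hl)) hi)]
      rw [← Finset.mul_sum, Finset.sum_ite_eq (Finset.range (i + 1)) k
        fun _ => (p k).eval (lam 0), if_pos hk]
    rw [Finset.sum_congr rfl h4, ← Finset.mul_sum, hc, hs, Polynomial.eval_finset_sum]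
  -- row sums and vanishing
  have hBzero : ∀ u v, ¬ G.dist u v ≤ i → B u v = 0 := by
    intro u v h
    exact aux_aeval_zero G s hsdeg u v (by omega)
  have hrow : ∀ u, ∑ v ∈ filt u, B u v = c := by
    intro u
    have h1 : ∑ v, B u v = c := by
      rw [hB, hA]
      rw [aux_aeval_row G hreg s u, hc, hlam0]
    have h2 := Finset.sum_filter_add_sum_filter_not Finset.univ
      (fun v => G.dist u v ≤ i) (fun v => B u v)
    have h3 : ∑ v ∈ Finset.univ.filter (fun v => ¬ G.dist u v ≤ i), B u v = 0 :=
      Finset.sum_eq_zero fun v hv => hBzero u v (Finset.mem_filter.mp hv).2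
    rw [h3, add_zero, h1] at h2
    exact h2
  have hNpos : ∀ u, 0 < N u := by
    intro u
    refine Finset.card_pos.mpr ⟨u, Finset.mem_filter.mpr ⟨Finset.mem_univ u, ?_⟩⟩
    rw [SimpleGraph.dist_self]
    omega
  have hNR : ∀ u, (0 : ℝ) < (N u : ℝ) := fun u => by exact_mod_cast hNpos u
  -- key identity
  have key : ∀ u, ∑ v ∈ filt u, (B u v - c / (N u : ℝ)) ^ 2
      = (∑ v ∈ filt u, (B u v) ^ 2) - c ^ 2 / (N u : ℝ) := by
    intro u
    have hNne : ((N u : ℕ) : ℝ) ≠ 0 := (hNR u).ne'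
    rw [Finset.sum_congr rfl fun v _ => show (B u v - c / (N u : ℝ)) ^ 2
      = (B u v) ^ 2 - (2 * c / (N u : ℝ)) * (B u v) + (c / (N u : ℝ)) ^ 2 by ring]
    rw [Finset.sum_add_distrib, Finset.sum_sub_distrib, ← Finset.mul_sum, hrow u,
      Finset.sum_const, nsmul_eq_mul]
    have hcard : ((filt u).card : ℝ) = (N u : ℝ) := rfl
    rw [hcard]
    field_simp
    ring
  -- total sums
  have hfull : ∀ u, ∑ v ∈ filt u, (B u v) ^ 2 = ∑ v, (B u v) ^ 2 := by
    intro u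
    have h2 := Finset.sum_filter_add_sum_filter_not Finset.univ
      (fun v => G.dist u v ≤ i) (fun v => (B u v) ^ 2)
    have h3 : ∑ v ∈ Finset.univ.filter (fun v => ¬ G.dist u v ≤ i), (B u v) ^ 2 = 0 :=
      Finset.sum_eq_zero fun v hv => by
        rw [hBzero u v (Finset.mem_filter.mp hv).2]; ring
    rw [h3, add_zero] at h2
    exact h2
  have hsq : ∑ u, ∑ v ∈ filt u, (B u v) ^ 2 = (n : ℝ) * c := by
    rw [Finset.sum_congr rfl fun u _ => hfull u]
    have h5 : (B * B).trace = ∑ u, ∑ v, B u v * B v u := by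
      rw [Matrix.trace]
      exact Finset.sum_congr rfl fun u _ => by rw [Matrix.diag_apply, Matrix.mul_apply]
    rw [h5] at htrB2
    rw [← htrB2]
    refine Finset.sum_congr rfl fun u _ => Finset.sum_congr rfl fun v _ => ?_
    have hsymm : B u v = B v u := aux_aeval_symm G s u v
    rw [sq, hsymm]
  have hDsum : ∑ u, ∑ v ∈ filt u, (B u v - c / (N u : ℝ)) ^ 2
      = (n : ℝ) * c - c ^ 2 * T := by
    rw [Finset.sum_congr rfl fun u _ => key u, Finset.sum_sub_distrib, hsq]
    congr 1
    rw [hT, Finset.mul_sum]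
    exact Finset.sum_congr rfl fun u _ => by rw [div_eq_mul_inv]
  have hDnonneg : (0 : ℝ) ≤ ∑ u, ∑ v ∈ filt u, (B u v - c / (N u : ℝ)) ^ 2 :=
    Finset.sum_nonneg fun u _ => Finset.sum_nonneg fun v _ => sq_nonneg _
  have hkey : c ^ 2 * T ≤ (n : ℝ) * c := by
    rw [hDsum] at hDnonneg
    linarith
  have hne : Nonempty (Fin n) := ⟨⟨0, hn⟩⟩
  have hTpos : (0 : ℝ) < T := by
    rw [hT]
    exact Finset.sum_pos (fun u _ => inv_pos.mpr (hNR u)) Finset.univ_nonempty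
  have hineq : c ≤ (n : ℝ) / T := by
    rw [le_div_iff₀ hTpos]
    nlinarith
  refine ⟨hineq, ?_, ?_⟩
  · -- equality implies B = ballMatrix
    intro heq
    have hcT : c * T = (n : ℝ) := by
      rw [heq, div_mul_cancel₀ _ hTpos.ne']
    have hzero : ∑ u, ∑ v ∈ filt u, (B u v - c / (N u : ℝ)) ^ 2 = 0 := by
      rw [hDsum]
      have : c ^ 2 * T = c * (c * T) := by ring
      rw [this, hcT]
      ring
    have hptw : ∀ u, ∀ v ∈ filt u, B u v = c / (N u : ℝ) := by
      intro u v hv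
      have h2 := (Finset.sum_eq_zero_iff_of_nonneg fun u _ =>
        Finset.sum_nonneg fun v _ => sq_nonneg _).mp hzero u (Finset.mem_univ u)
      have h3 := (Finset.sum_eq_zero_iff_of_nonneg fun v _ => sq_nonneg _).mp h2 v hv
      have h4 := sq_eq_zero_iff.mp h3
      linarith [h4]
    have hBf : ∀ u v, G.dist u v ≤ i → B u v = c / (N u : ℝ) := fun u v h =>
      hptw u v (Finset.mem_filter.mpr ⟨Finset.mem_univ v, h⟩)
    have hBsymm : ∀ u v, B u v = B v u := fun u v => aux_aeval_symm G s u v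
    have hfsym : ∀ u v, G.dist u v ≤ i → c / (N u : ℝ) = c / (N v : ℝ) := by
      intro u v h
      rw [← hBf u v h, hBsymm u v, hBf v u (by rwa [SimpleGraph.dist_comm] at h)]
    have htrB' : ∑ u, B u u = (n : ℝ) := by
      rw [← htrB, Matrix.trace]
      exact Finset.sum_congr rfl fun u _ => rfl
    have hdiag : ∀ u, B u u = c / (N u : ℝ) := fun u =>
      hBf u u (by rw [SimpleGraph.dist_self]; omega)
    have hf1 : ∀ u, c / (N u : ℝ) = 1 := by
      rcases Nat.eq_zero_or_pos i with hi0 | hipos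
      · intro u
        have hNu : N u = 1 := by
          have hfu : filt u = {u} := by
            ext v
            rw [hfilt]
            simp only [Finset.mem_filter, Finset.mem_univ, true_and, Finset.mem_singleton,
              hi0, Nat.le_zero]
            rw [hconn.dist_eq_zero_iff]
            exact eq_comm
          rw [hN]
          simp [hfu]
        have hc1 : c = 1 := by
          rw [hc, hs, hi0]
          simp [hp0]
        rw [hc1, hNu]
        norm_num
      · have hconst : ∀ u v, c / (N u : ℝ) = c / (N v : ℝ) := by
          apply aux_const_of_adj hconn (fun u => c / (N u : ℝ))
          intro u v huv
          apply hfsym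
          rw [SimpleGraph.dist_eq_one_iff_adj.mpr huv]
          omega
        intro u
        have hsumf : ∑ v : Fin n, c / (N v : ℝ) = (n : ℝ) := by
          rw [← htrB']
          exact Finset.sum_congr rfl fun v _ => (hdiag v).symm
        have hconstsum : ∑ v : Fin n, c / (N v : ℝ) = (n : ℝ) * (c / (N u : ℝ)) := by
          rw [Finset.sum_congr rfl fun v _ => hconst v u, Finset.sum_const,
            Finset.card_univ, Fintype.card_fin, nsmul_eq_mul]
        rw [hconstsum] at hsumf
        exact mul_left_cancel₀ hnne (hsumf.trans (mul_one (n : ℝ)).symm)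
    ext u v
    rw [ballMatrix]
    simp only [Matrix.of_apply]
    by_cases h : G.dist u v ≤ i
    · rw [if_pos h, hBf u v h, hf1 u]
    · rw [if_neg h, hBzero u v h]
  · intro hBS
    have hNc : ∀ u, ((N u : ℕ) : ℝ) = c := by
      intro u
      rw [← hrow u]
      rw [Finset.sum_congr rfl fun v hv => show B u v = 1 by
        rw [hBS]
        simp [ballMatrix, (Finset.mem_filter.mp (by rwa [hfilt] at hv)).2]]
      rw [Finset.sum_const, nsmul_eq_mul, mul_one]
    have hTc : T = (n : ℝ) * c⁻¹ := by
      rw [hT, Finset.sum_congr rfl fun u _ => by rw [hNc u], Finset.sum_const,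
        Finset.card_univ, Fintype.card_fin, nsmul_eq_mul]
    rw [hTc]
    field_simp
end

section
/- A regular graph Γ with D = d is distance-regular if and only if s_{d-1}(λ0) equals the harmonic mean of the (d−1)-neighborhood sizes: s_{d-1}(λ0) = n / Σ_{u∈V} |N_{d-1}(u)|^{-1}. -/
open Matrix Polynomial Finset

/-!
Write `s = p₀ + ⋯ + p_{d-1}`, `M = s(A)` and `σ = s(λ₀)`. By regularity `M` has constant row
sums `σ`, by orthogonality `Σ_{u,v} M_{uv}² = n‖s‖² = nσ`, and `M` vanishes beyond distance
`d - 1`. Cauchy–Schwarz on each row gives `Σ_u σ² / |N_{d-1}(u)| ≤ nσ`, i.e. `σ` is at most the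
harmonic mean of the ball sizes, with equality exactly when `M = S_{d-1}`.

The Hoffman polynomial `H = p₀ + ⋯ + p_d` satisfies `H(A) = J`, because `m_j H(λ_j) = n δ_{j0}`
and `E₀` is constant (its rows and columns are `δ`-eigenvectors of a connected regular graph).
Hence `p_d(A) = J - S_{d-1} = A_d`, and reading the three-term recurrence
`A p_{k+1}(A) = c_k p_k(A) + ⋯` entrywise propagates `p_k(A) = A_k` downwards from `k = d`.
-/

theorem Polynomial.aeval_mul_eq_eval_smul {R S : Type*} [CommRing R] [Ring S] [Algebra R S]
    {a b : S} {μ : R} (h : a * b = μ • b) (q : R[X]) : aeval a q * b = q.eval μ • b := by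
  have := Module.End.aeval_apply_of_mem_apply_eq_smul (f := Algebra.lmul R S a) (p := q) h
  rwa [aeval_algHom_apply, Algebra.coe_lmul_eq_mul, LinearMap.mul_apply'] at this

theorem Matrix.IsSymm.aeval {ι R : Type*} [Fintype ι] [DecidableEq ι] [CommSemiring R]
    {A : Matrix ι ι R} (hA : A.IsSymm) (q : R[X]) : (aeval A q).IsSymm := by
  simp only [IsSymm, aeval_eq_sum_range, transpose_sum, transpose_smul, transpose_pow,
    hA.eq]

theorem Matrix.IsSymm.trace_mul_self {ι R : Type*} [Fintype ι] [CommSemiring R]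
    {M : Matrix ι ι R} (hM : M.IsSymm) :
    trace (M * M) = ∑ u, ∑ v, M u v ^ 2 := by
  simp only [trace, diag, mul_apply, sq]
  exact sum_congr rfl fun u _ ↦ sum_congr rfl fun v _ ↦ by rw [hM.apply u v]

structure IsSpectralDecomposition {ι R : Type*} [Fintype ι] [DecidableEq ι] [CommRing R]
    (A : Matrix ι ι R) (d : ℕ) (lam : ℕ → R) (E : ℕ → Matrix ι ι R) : Prop where
  mul_eq : ∀ j ≤ d, ∀ k ≤ d, E j * E k = if j = k then E j else 0
  sum_eq_one : ∑ j ∈ range (d + 1), E j = 1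
  eq_sum : A = ∑ j ∈ range (d + 1), lam j • E j

namespace IsSpectralDecomposition

variable {ι R : Type*} [Fintype ι] [DecidableEq ι] [CommRing R] {A : Matrix ι ι R} {d : ℕ}
  {lam : ℕ → R} {E : ℕ → Matrix ι ι R}

theorem mul_right (hA : IsSpectralDecomposition A d lam E) {k : ℕ} (hk : k ≤ d) :
    A * E k = lam k • E k := by
  rw [hA.eq_sum, sum_mul, sum_eq_single_of_mem k (mem_range.2 (by omega))]
  · rw [smul_mul_assoc, hA.mul_eq k hk k hk, if_pos rfl]
  · intro j hj hjk
    rw [smul_mul_assoc, hA.mul_eq j (mem_range_succ_iff.1 hj) k hk, if_neg hjk, smul_zero]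

theorem mul_left (hA : IsSpectralDecomposition A d lam E) {k : ℕ} (hk : k ≤ d) :
    E k * A = lam k • E k := by
  rw [hA.eq_sum, mul_sum, sum_eq_single_of_mem k (mem_range.2 (by omega))]
  · rw [mul_smul_comm, hA.mul_eq k hk k hk, if_pos rfl]
  · intro j hj hjk
    rw [mul_smul_comm, hA.mul_eq k hk j (mem_range_succ_iff.1 hj), if_neg (Ne.symm hjk), smul_zero]

theorem aeval_eq (hA : IsSpectralDecomposition A d lam E) (q : R[X]) :
    aeval A q = ∑ j ∈ range (d + 1), q.eval (lam j) • E j := by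
  calc aeval A q = ∑ j ∈ range (d + 1), aeval A q * E j := by
        rw [← mul_sum, hA.sum_eq_one, mul_one]
    _ = _ := sum_congr rfl fun j hj ↦
        aeval_mul_eq_eval_smul (hA.mul_right (mem_range_succ_iff.1 hj)) q

theorem aeval_congr (hA : IsSpectralDecomposition A d lam E) {q r : R[X]}
    (h : ∀ j ≤ d, q.eval (lam j) = r.eval (lam j)) : aeval A q = aeval A r := by
  rw [hA.aeval_eq, hA.aeval_eq]
  exact sum_congr rfl fun j hj ↦ by rw [h j (mem_range_succ_iff.1 hj)]

theorem trace_aeval_mul_aeval (hA : IsSpectralDecomposition A d lam E) (q r : R[X]) :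
    trace (aeval A q * aeval A r) =
      ∑ j ∈ range (d + 1), q.eval (lam j) * r.eval (lam j) * trace (E j) := by
  rw [← map_mul, hA.aeval_eq]
  simp only [trace_sum, trace_smul, eval_mul, smul_eq_mul]

end IsSpectralDecomposition

theorem Polynomial.exists_eq_sum_smul_of_natDegree_le {K : Type*} [Field K] {d : ℕ}
    {p : ℕ → K[X]} (hdeg : ∀ k ≤ d, (p k).natDegree = k) (hne : ∀ k ≤ d, p k ≠ 0) {k : ℕ}
    (hk : k ≤ d) {q : K[X]} (hq : q.natDegree ≤ k) :
    ∃ c : ℕ → K, q = ∑ j ∈ range (k + 1), c j • p j := by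
  classical
  -- extend `p` beyond `d` to a full polynomial sequence, to use `Sequence.span_degreeLT`
  let S : Sequence K := ⟨fun i ↦ if i ≤ d then p i else X ^ i, fun i ↦ by
    split_ifs with h
    · rw [degree_eq_natDegree (hne i h), hdeg i h]
    · exact degree_X_pow i⟩
  have hmem : q ∈ Submodule.span K (S '' ↑(range (k + 1))) := by
    rw [coe_range, S.span_degreeLT fun i _ ↦ (leadingCoeff_ne_zero.2 (S.ne_zero i)).isUnit,
      mem_degreeLT]
    exact (degree_le_of_natDegree_le hq).trans_lt (by exact_mod_cast k.lt_succ_self)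
  obtain ⟨c, hc⟩ := (Submodule.mem_span_image_finset_iff_exists_fun' K).1 hmem
  refine ⟨c, hc.symm.trans (sum_congr rfl fun j hj ↦ ?_)⟩
  change c j • (if j ≤ d then p j else X ^ j) = c j • p j
  rw [if_pos (by rw [mem_range] at hj; omega)]

noncomputable def spectralInner (n d : ℕ) (lam m : ℕ → ℝ) (q r : ℝ[X]) : ℝ :=
  (1 / (n : ℝ)) * ∑ t ∈ range (d + 1), m t * q.eval (lam t) * r.eval (lam t)

section SpectralInner

variable {n d : ℕ} {lam m : ℕ → ℝ}

theorem spectralInner_comm (q r : ℝ[X]) :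
    spectralInner n d lam m q r = spectralInner n d lam m r q := by
  simp only [spectralInner, mul_right_comm]

theorem spectralInner_X_mul (q r : ℝ[X]) :
    spectralInner n d lam m (X * q) r = spectralInner n d lam m q (X * r) := by
  simp only [spectralInner, eval_mul, eval_X]
  congr 1
  exact sum_congr rfl fun t _ ↦ by ring

theorem spectralInner_smul_left (a : ℝ) (q r : ℝ[X]) :
    spectralInner n d lam m (a • q) r = a * spectralInner n d lam m q r := by
  simp only [spectralInner, eval_smul, smul_eq_mul, mul_sum]
  exact sum_congr rfl fun t _ ↦ by ring

theorem spectralInner_sum_left (s : Finset ℕ) (f : ℕ → ℝ[X]) (r : ℝ[X]) :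
    spectralInner n d lam m (∑ k ∈ s, f k) r = ∑ k ∈ s, spectralInner n d lam m (f k) r := by
  simp only [spectralInner, eval_finsetSum, mul_sum, sum_mul]
  rw [sum_comm]

theorem spectralInner_congr_left {q q' : ℝ[X]} (h : ∀ t ≤ d, q.eval (lam t) = q'.eval (lam t))
    (r : ℝ[X]) : spectralInner n d lam m q r = spectralInner n d lam m q' r := by
  unfold spectralInner
  exact congrArg _ (sum_congr rfl fun t ht ↦ by rw [h t (mem_range_succ_iff.1 ht)])

theorem spectralInner_self_pos (hn : 0 < n) (hlam : Set.InjOn lam (range (d + 1)))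
    (hm : ∀ t ≤ d, 0 < m t) {q : ℝ[X]} (hq : q.natDegree ≤ d) (hq0 : q ≠ 0) :
    0 < spectralInner n d lam m q q := by
  obtain ⟨t, ht, hqt⟩ : ∃ t ∈ range (d + 1), q.eval (lam t) ≠ 0 := by
    by_contra! h
    refine hq0 (eq_zero_of_natDegree_lt_card_of_eval_eq_zero' q ((range (d + 1)).image lam)
      (by simpa using h) ?_)
    rw [card_image_of_injOn hlam, card_range]
    omega
  refine mul_pos (by positivity) (sum_pos' (fun j hj ↦ ?_) ⟨t, ht, ?_⟩)
  · rw [mul_assoc]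
    exact mul_nonneg (hm j (mem_range_succ_iff.1 hj)).le (mul_self_nonneg _)
  · rw [mul_assoc]
    exact mul_pos (hm t (mem_range_succ_iff.1 ht)) (mul_self_pos.2 hqt)

end SpectralInner

structure IsPredistanceFamily (n d : ℕ) (lam m : ℕ → ℝ) (p : ℕ → ℝ[X]) : Prop where
  natDegree_eq : ∀ k ≤ d, (p k).natDegree = k
  ne_zero : ∀ k ≤ d, p k ≠ 0
  inner_eq : ∀ k ≤ d, ∀ l ≤ d,
    spectralInner n d lam m (p k) (p l) = if k = l then (p k).eval (lam 0) else 0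

namespace IsPredistanceFamily

variable {n d : ℕ} {lam m : ℕ → ℝ} {p : ℕ → ℝ[X]}

theorem exists_eq_sum_smul (hp : IsPredistanceFamily n d lam m p) {k : ℕ} (hk : k ≤ d)
    {q : ℝ[X]} (hq : q.natDegree ≤ k) :
    ∃ c : ℕ → ℝ, q = ∑ j ∈ range (k + 1), c j • p j :=
  exists_eq_sum_smul_of_natDegree_le hp.natDegree_eq hp.ne_zero hk hq

theorem sum_smul_inner (hp : IsPredistanceFamily n d lam m p) (c : ℕ → ℝ) {N l : ℕ}
    (hN : N ≤ d + 1) (hl : l < N) :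
    spectralInner n d lam m (∑ j ∈ range N, c j • p j) (p l) = c l * (p l).eval (lam 0) := by
  simp only [spectralInner_sum_left, spectralInner_smul_left]
  rw [sum_eq_single_of_mem l (mem_range.2 hl), hp.inner_eq l (by omega) l (by omega), if_pos rfl]
  intro j hj hjl
  rw [hp.inner_eq j (by rw [mem_range] at hj; omega) l (by omega), if_neg hjl, mul_zero]

theorem inner_sum_right (hp : IsPredistanceFamily n d lam m p) {N l : ℕ} (hN : N ≤ d + 1)
    (hl : l < N) :
    spectralInner n d lam m (p l) (∑ k ∈ range N, p k) = (p l).eval (lam 0) := by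
  have h := hp.sum_smul_inner (fun _ ↦ 1) hN hl
  simp only [one_smul, one_mul] at h
  rwa [spectralInner_comm]

theorem inner_eq_zero_of_natDegree_lt (hp : IsPredistanceFamily n d lam m p) {l : ℕ} (hl : l ≤ d)
    {r : ℝ[X]} (hr : r.natDegree < l) :
    spectralInner n d lam m r (p l) = 0 := by
  obtain ⟨c, rfl⟩ := hp.exists_eq_sum_smul (k := l - 1) (q := r) (by omega) (by omega)
  simp only [spectralInner_sum_left, spectralInner_smul_left]
  refine sum_eq_zero fun j hj ↦ ?_
  rw [mem_range] at hj
  rw [hp.inner_eq j (by omega) l hl, if_neg (by omega), mul_zero]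

theorem eval_zero_pos (hp : IsPredistanceFamily n d lam m p) (hn : 0 < n)
    (hlam : Set.InjOn lam (range (d + 1))) (hm : ∀ t ≤ d, 0 < m t) {k : ℕ} (hk : k ≤ d) :
    0 < (p k).eval (lam 0) := by
  simpa [hp.inner_eq k hk k hk] using
    spectralInner_self_pos hn hlam hm ((hp.natDegree_eq k hk).trans_le hk) (hp.ne_zero k hk)

theorem natDegree_sum_le (hp : IsPredistanceFamily n d lam m p) {N : ℕ} (hN : N ≤ d + 1) :
    (∑ k ∈ range N, p k).natDegree ≤ N - 1 :=
  natDegree_sum_le_of_forall_le _ _ fun k hk ↦ by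
    rw [mem_range] at hk
    rw [hp.natDegree_eq k (by omega)]
    omega

theorem inner_sum_self (hp : IsPredistanceFamily n d lam m p) {N : ℕ} (hN : N ≤ d + 1) :
    spectralInner n d lam m (∑ k ∈ range N, p k) (∑ k ∈ range N, p k) =
      ∑ k ∈ range N, (p k).eval (lam 0) := by
  rw [spectralInner_sum_left]
  exact sum_congr rfl fun k hk ↦ hp.inner_sum_right hN (mem_range.1 hk)

theorem inner_sum_eq_eval (hp : IsPredistanceFamily n d lam m p) {q : ℝ[X]} (hq : q.natDegree ≤ d) :
    spectralInner n d lam m (∑ k ∈ range (d + 1), p k) q = q.eval (lam 0) := by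
  obtain ⟨c, rfl⟩ := hp.exists_eq_sum_smul le_rfl hq
  rw [spectralInner_comm]
  simp only [spectralInner_sum_left, spectralInner_smul_left, eval_finsetSum, eval_smul,
    smul_eq_mul]
  exact sum_congr rfl fun k hk ↦ by rw [hp.inner_sum_right le_rfl (mem_range.1 hk)]

theorem inner_X_mul_ne_zero (hp : IsPredistanceFamily n d lam m p) (hn : 0 < n)
    (hlam : Set.InjOn lam (range (d + 1))) (hm : ∀ t ≤ d, 0 < m t) {k : ℕ} (hk : k + 1 ≤ d) :
    spectralInner n d lam m (p (k + 1)) (X * p k) ≠ 0 := by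
  have hdeg : (X * p k).natDegree = k + 1 := by
    rw [natDegree_X_mul (hp.ne_zero k (by omega)), hp.natDegree_eq k (by omega)]
  obtain ⟨e, he⟩ := hp.exists_eq_sum_smul hk hdeg.le
  have hek : e (k + 1) ≠ 0 := by
    intro h0
    have : (X * p k).natDegree ≤ k := by
      rw [he, sum_range_succ, h0, zero_smul, add_zero]
      refine natDegree_sum_le_of_forall_le _ _ fun j hj ↦ (natDegree_smul_le _ _).trans ?_
      rw [mem_range] at hj
      rw [hp.natDegree_eq j (by omega)]
      omega
    omega
  rw [spectralInner_comm, he, hp.sum_smul_inner e (by omega) (by omega)]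
  exact mul_ne_zero hek (hp.eval_zero_pos hn hlam hm hk).ne'

theorem exists_X_mul_eq_sum (hp : IsPredistanceFamily n d lam m p) (hn : 0 < n)
    (hlam : Set.InjOn lam (range (d + 1))) (hm : ∀ t ≤ d, 0 < m t) {k : ℕ} (hk : k + 1 ≤ d) :
    ∃ c : ℕ → ℝ, c k ≠ 0 ∧ (∀ j < k, c j = 0) ∧
      ∀ t ≤ d, lam t * (p (k + 1)).eval (lam t) =
        ∑ j ∈ range (d + 1), c j * (p j).eval (lam t) := by
  -- `X * p (k + 1)` may have degree `d + 1`: expand its interpolant on the spectrum instead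
  set q := Lagrange.interpolate (range (d + 1)) lam fun t ↦ (X * p (k + 1)).eval (lam t)
  have hq : ∀ t ≤ d, q.eval (lam t) = (X * p (k + 1)).eval (lam t) := fun t ht ↦
    Lagrange.eval_interpolate_at_node _ hlam (mem_range.2 (by omega))
  have hqdeg : q.natDegree ≤ d := by
    have := Lagrange.degree_interpolate_lt (fun t ↦ (X * p (k + 1)).eval (lam t)) hlam
    rw [card_range] at this
    exact natDegree_le_of_degree_le (Order.le_of_lt_succ this)
  obtain ⟨c, hc⟩ := hp.exists_eq_sum_smul le_rfl hqdeg
  have hcoeff : ∀ j ≤ d,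
      c j * (p j).eval (lam 0) = spectralInner n d lam m (p (k + 1)) (X * p j) := fun j hj ↦ by
    rw [← hp.sum_smul_inner c le_rfl (by omega), ← hc, spectralInner_congr_left hq,
      spectralInner_X_mul]
  refine ⟨c, fun hck ↦ ?_, fun j hj ↦ ?_, fun t ht ↦ ?_⟩
  · exact hp.inner_X_mul_ne_zero hn hlam hm hk (by rw [← hcoeff k (by omega), hck, zero_mul])
  · have h := hcoeff j (by omega)
    rw [spectralInner_comm, hp.inner_eq_zero_of_natDegree_lt hk (r := X * p j) ?_] at h
    · exact (mul_eq_zero.1 h).resolve_right (hp.eval_zero_pos hn hlam hm (by omega)).ne'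
    · rw [natDegree_X_mul (hp.ne_zero j (by omega)), hp.natDegree_eq j (by omega)]
      omega
  · have h := hq t ht
    rw [eval_mul, eval_X, hc, eval_finsetSum] at h
    simpa using h.symm

theorem mul_eval_sum (hp : IsPredistanceFamily n d lam m p) (hn : 0 < n)
    (hlam : Set.InjOn lam (range (d + 1))) {j : ℕ} (hj : j ≤ d) :
    m j * (∑ k ∈ range (d + 1), p k).eval (lam j) = if j = 0 then (n : ℝ) else 0 := by
  have hj' : j ∈ range (d + 1) := mem_range.2 (by omega)
  set L := Lagrange.basis (range (d + 1)) lam j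
  have hL : ∀ t ∈ range (d + 1), L.eval (lam t) = if t = j then 1 else 0 := by
    intro t ht
    split_ifs with h
    · exact h ▸ Lagrange.eval_basis_self hlam hj'
    · exact Lagrange.eval_basis_of_ne (Ne.symm h) ht
  have h := hp.inner_sum_eq_eval (q := L)
    (by rw [Lagrange.natDegree_basis hlam hj', card_range]; omega)
  rw [hL 0 (mem_range.2 (by omega)), spectralInner,
    sum_eq_single_of_mem j hj' fun t ht htj ↦ by rw [hL t ht, if_neg htj, mul_zero],
    hL j hj', if_pos rfl, mul_one, one_div, inv_mul_eq_iff_eq_mul₀ (by positivity)] at h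
  rw [h]
  simp only [eq_comm (a := 0), mul_ite, mul_one, mul_zero]

end IsPredistanceFamily

theorem Finset.sum_sub_div_card_sq {ι : Type*} (s : Finset ι) (hs : s.Nonempty) (f : ι → ℝ) :
    ∑ v ∈ s, (f v - (∑ w ∈ s, f w) / #s) ^ 2 = ∑ v ∈ s, f v ^ 2 - (∑ v ∈ s, f v) ^ 2 / #s := by
  have hs' : (#s : ℝ) ≠ 0 := by exact_mod_cast hs.card_pos.ne'
  simp only [sub_sq, sum_add_distrib, sum_sub_distrib, ← sum_mul, ← mul_sum, sum_const,
    nsmul_eq_mul]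
  field_simp
  ring

theorem apply_eq_div_card_of_sum_sq_le {ι : Type*} [Fintype ι] (N : ι → Finset ι)
    (hN : ∀ u, (N u).Nonempty) {M : ι → ι → ℝ} {σ : ℝ} (hsupp : ∀ u, ∀ v ∉ N u, M u v = 0)
    (hrow : ∀ u, ∑ v, M u v = σ) (hsq : ∑ u, ∑ v, M u v ^ 2 ≤ ∑ u, σ ^ 2 / #(N u)) :
    ∀ u, ∀ v ∈ N u, M u v = σ / #(N u) := by
  have hvar : ∀ u, ∑ v ∈ N u, (M u v - σ / #(N u)) ^ 2 = ∑ v, M u v ^ 2 - σ ^ 2 / #(N u) := by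
    intro u
    have hsum : ∑ v ∈ N u, M u v = σ :=
      (sum_subset (subset_univ _) fun v _ hv ↦ hsupp u v hv).trans (hrow u)
    have hsum_sq : ∑ v ∈ N u, M u v ^ 2 = ∑ v, M u v ^ 2 :=
      sum_subset (subset_univ _) fun v _ hv ↦ by rw [hsupp u v hv, sq, zero_mul]
    have := sum_sub_div_card_sq (N u) (hN u) (M u)
    rwa [hsum, hsum_sq] at this
  have hnonneg : ∀ u ∈ univ, 0 ≤ ∑ v ∈ N u, (M u v - σ / #(N u)) ^ 2 :=
    fun u _ ↦ sum_nonneg fun v _ ↦ sq_nonneg _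
  have hzero : ∑ u, ∑ v ∈ N u, (M u v - σ / #(N u)) ^ 2 = 0 := by
    refine le_antisymm ?_ (sum_nonneg hnonneg)
    rw [sum_congr rfl fun u _ ↦ hvar u, sum_sub_distrib]
    linarith
  intro u v hv
  have hu := (sum_eq_zero_iff_of_nonneg hnonneg).1 hzero u (mem_univ u)
  have huv := (sum_eq_zero_iff_of_nonneg fun v _ ↦ sq_nonneg _).1 hu v hv
  exact sub_eq_zero.1 (pow_eq_zero_iff two_ne_zero |>.1 huv)

namespace SimpleGraph

theorem Connected.apply_eq_of_forall_adj {V β : Type*} {G : SimpleGraph V} (hconn : G.Connected)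
    {f : V → β} (h : ∀ u v, G.Adj u v → f u = f v) (u v : V) : f u = f v := by
  obtain ⟨w⟩ := hconn u v
  induction w with
  | nil => rfl
  | cons hadj _ ih => exact (h _ _ hadj).trans ih

theorem Connected.card_eq_card_of_apply_eq_div_card {V : Type*} {G : SimpleGraph V}
    (hconn : G.Connected) {i : ℕ} {N : V → Finset V} (hN : ∀ u v, v ∈ N u ↔ G.dist u v ≤ i)
    {M : Matrix V V ℝ} (hsymm : M.IsSymm) {σ : ℝ} (hσ : σ ≠ 0)
    (hM : ∀ u, ∀ v ∈ N u, M u v = σ / #(N u)) (u v : V) : (#(N u) : ℝ) = #(N v) := by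
  rcases Nat.eq_zero_or_pos i with rfl | hi
  · have hN₀ (u : V) : N u = {u} := by
      ext v
      simp [hN, hconn.dist_eq_zero_iff, eq_comm]
    simp [hN₀]
  refine hconn.apply_eq_of_forall_adj (f := fun u ↦ (#(N u) : ℝ)) (fun u v huv ↦ ?_) u v
  have h := hM u v ((hN u v).2 (by rw [dist_eq_one_iff_adj.2 huv]; omega))
  rw [← hsymm.apply u v, hM v u ((hN v u).2 (by rw [dist_eq_one_iff_adj.2 huv.symm]; omega)),
    div_eq_mul_inv, div_eq_mul_inv, mul_right_inj' hσ, _root_.inv_inj] at h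
  exact h.symm

section

variable {V : Type*} [Fintype V] [DecidableEq V] {G : SimpleGraph V} [DecidableRel G.Adj]

theorem aeval_adjMatrix_apply_eq_zero {R : Type*} [CommSemiring R] {q : R[X]} {u v : V}
    (h : q.natDegree < G.dist u v) : aeval (G.adjMatrix R) q u v = 0 := by
  rw [aeval_eq_sum_range, Matrix.sum_apply]
  refine sum_eq_zero fun i hi ↦ ?_
  rw [Matrix.smul_apply, adjMatrix_pow_apply_eq_card_walk,
    Fintype.card_eq_zero_iff.2 ⟨fun w ↦ ?_⟩, Nat.cast_zero, smul_zero]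
  have hw : w.1.length = i := w.2
  have := G.dist_le w.1
  rw [mem_range] at hi
  omega

theorem IsRegularOfDegree.sum_aeval_adjMatrix_apply {R : Type*} [CommRing R] {δ : ℕ}
    (hreg : G.IsRegularOfDegree δ) (q : R[X]) (u : V) :
    ∑ v, aeval (G.adjMatrix R) q u v = q.eval (δ : R) := by
  have hJ : G.adjMatrix R * of (fun _ _ ↦ (1 : R)) = (δ : R) • of fun _ _ ↦ 1 := by
    ext v w
    simp [adjMatrix_mul_apply, hreg v]
  simpa [mul_apply] using congrFun (congrFun (aeval_mul_eq_eval_smul hJ q) u) u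

theorem Connected.apply_eq_of_mulVec_eq_smul (hconn : G.Connected) {δ : ℕ}
    (hreg : G.IsRegularOfDegree δ) {x : V → ℝ} (hx : G.adjMatrix ℝ *ᵥ x = (δ : ℝ) • x)
    (u v : V) : x u = x v := by
  have : G.lapMatrix ℝ *ᵥ x = 0 := by
    ext w
    rw [lapMatrix_mulVec_apply, hreg w, ← adjMatrix_mulVec_apply, hx]
    simp
  exact (lapMatrix_mulVec_eq_zero_iff_forall_reachable G).1 this u v (hconn u v)

theorem Connected.exists_eq_const_of_mul_eq_smul (hconn : G.Connected) {δ : ℕ}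
    (hreg : G.IsRegularOfDegree δ) {M : Matrix V V ℝ} (hl : G.adjMatrix ℝ * M = (δ : ℝ) • M)
    (hr : M * G.adjMatrix ℝ = (δ : ℝ) • M) : ∃ c, ∀ u v, M u v = c := by
  have hcol {N : Matrix V V ℝ} (hN : G.adjMatrix ℝ * N = (δ : ℝ) • N) (u u' w : V) :
      N u w = N u' w :=
    hconn.apply_eq_of_mulVec_eq_smul hreg (x := fun y ↦ N y w)
      (funext fun y ↦ congrFun (congrFun hN y) w) u u'
  have hrow : G.adjMatrix ℝ * Mᵀ = (δ : ℝ) • Mᵀ := by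
    rw [← transpose_transpose (G.adjMatrix ℝ * Mᵀ), transpose_mul, transpose_transpose,
      transpose_adjMatrix, hr, transpose_smul]
  obtain ⟨u₀⟩ := hconn.nonempty
  exact ⟨M u₀ u₀, fun u v ↦ (hcol hl u u₀ v).trans (hcol hrow v u₀ u₀)⟩

end

variable {n : ℕ} {G : SimpleGraph (Fin n)}

theorem ballMatrix_eq_sum_distMatrix (G : SimpleGraph (Fin n)) (i : ℕ) :
    ballMatrix G i = ∑ k ∈ range (i + 1), distMatrix G k := by
  ext u v
  simp [ballMatrix, distMatrix, Matrix.sum_apply]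

theorem sum_ballMatrix_apply (G : SimpleGraph (Fin n)) (i : ℕ) (u : Fin n) :
    ∑ v, ballMatrix G i u v = #(univ.filter fun v ↦ G.dist u v ≤ i) := by
  simp [ballMatrix, sum_boole]

theorem Connected.adjMatrix_mul_distMatrix_apply_eq_zero [DecidableRel G.Adj] (hconn : G.Connected)
    {j : ℕ} {u v : Fin n} (h : G.dist u v + 1 < j) : (G.adjMatrix ℝ * distMatrix G j) u v = 0 := by
  rw [adjMatrix_mul_apply]
  refine sum_eq_zero fun w hw ↦ ?_
  have hwu : G.dist w u = 1 := dist_eq_one_iff_adj.2 ((mem_neighborFinset _ _ _).1 hw).symm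
  have := hconn.dist_triangle (u := w) (v := u) (w := v)
  simp only [distMatrix, of_apply]
  rw [if_neg (by omega)]

theorem Connected.eq_ballMatrix_of_sum_sq_eq (hconn : G.Connected) {i : ℕ}
    {M : Matrix (Fin n) (Fin n) ℝ} {σ : ℝ} (hsymm : M.IsSymm)
    (hsupp : ∀ u v, i < G.dist u v → M u v = 0) (hrow : ∀ u, ∑ v, M u v = σ)
    (hsq : ∑ u, ∑ v, M u v ^ 2 = n * σ)
    (hharm : σ = n / ∑ u, (#(univ.filter fun v ↦ G.dist u v ≤ i) : ℝ)⁻¹) :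
    M = ballMatrix G i := by
  have hne : Nonempty (Fin n) := hconn.nonempty
  set N : Fin n → Finset (Fin n) := fun u ↦ univ.filter fun v ↦ G.dist u v ≤ i
  have hN (u v : Fin n) : v ∈ N u ↔ G.dist u v ≤ i := by simp [N]
  have hcard (u : Fin n) : (0 : ℝ) < #(N u) := by
    exact_mod_cast card_pos.2 ⟨u, (hN u u).2 (by simp)⟩
  have hσ : σ * ∑ u, (#(N u) : ℝ)⁻¹ = n := by
    rw [hharm, div_mul_cancel₀ _ (sum_pos (fun u _ ↦ inv_pos.2 (hcard u)) univ_nonempty).ne']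
  have hn : (n : ℝ) ≠ 0 := by exact_mod_cast (Fin.pos_iff_nonempty.2 hne).ne'
  have hσ0 : σ ≠ 0 := by
    rintro rfl
    exact hn (by rw [← hσ, zero_mul])
  have hM := apply_eq_div_card_of_sum_sq_le N (fun u ↦ card_pos.1 (by exact_mod_cast hcard u))
    (fun u v hv ↦ hsupp u v (by simpa [hN] using hv)) hrow <| by
      rw [hsq, ← hσ, mul_sum, sum_mul]
      exact le_of_eq (sum_congr rfl fun u _ ↦ by ring)
  have hball (u : Fin n) : (#(N u) : ℝ) = σ := by
    have hconst := hconn.card_eq_card_of_apply_eq_div_card hN hsymm hσ0 hM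
    rw [sum_congr rfl fun v _ ↦ by rw [hconst v u], sum_const, card_univ, Fintype.card_fin,
      nsmul_eq_mul, mul_comm, mul_assoc] at hσ
    exact (inv_mul_eq_one₀ (hcard u).ne').1 (mul_left_cancel₀ hn (hσ.trans (mul_one _).symm))
  ext u v
  by_cases h : G.dist u v ≤ i
  · rw [hM u v ((hN u v).2 h), hball u, div_self hσ0]
    simp [ballMatrix, h]
  · rw [hsupp u v (by omega)]
    simp [ballMatrix, h]

theorem IsRegularOfDegree.card_ball_eq_eval_of_aeval_eq_distMatrix [DecidableRel G.Adj] {d δ : ℕ}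
    {p : ℕ → ℝ[X]} (hreg : G.IsRegularOfDegree δ) (hd : 1 ≤ d)
    (hdr : ∀ i ≤ d, aeval (G.adjMatrix ℝ) (p i) = distMatrix G i) (u : Fin n) :
    (#(univ.filter fun v ↦ G.dist u v ≤ d - 1) : ℝ) = (∑ k ∈ range d, p k).eval (δ : ℝ) := by
  have h : ∑ k ∈ range d, distMatrix G k = aeval (G.adjMatrix ℝ) (∑ k ∈ range d, p k) := by
    rw [map_sum]
    exact sum_congr rfl fun k hk ↦ (hdr k (by rw [mem_range] at hk; omega)).symm
  rw [← sum_ballMatrix_apply, ballMatrix_eq_sum_distMatrix, Nat.sub_add_cancel hd, h,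
    hreg.sum_aeval_adjMatrix_apply]

end SimpleGraph

namespace IsPredistanceFamily

variable {n d δ : ℕ} {lam m : ℕ → ℝ} {p : ℕ → ℝ[X]} {E : ℕ → Matrix (Fin n) (Fin n) ℝ}
  {G : SimpleGraph (Fin n)} [DecidableRel G.Adj]

theorem sum_sq_aeval_sum_apply (hp : IsPredistanceFamily n d lam m p) (hn : 0 < n)
    {A : Matrix (Fin n) (Fin n) ℝ} (hA : A.IsSymm) (hS : IsSpectralDecomposition A d lam E)
    (htr : ∀ j ≤ d, trace (E j) = m j) {N : ℕ} (hN : N ≤ d + 1) :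
    ∑ u, ∑ v, aeval A (∑ k ∈ range N, p k) u v ^ 2 = n * (∑ k ∈ range N, p k).eval (lam 0) := by
  rw [← (hA.aeval _).trace_mul_self, hS.trace_aeval_mul_aeval, eval_finsetSum,
    ← hp.inner_sum_self hN,
    spectralInner, ← mul_assoc, mul_one_div_cancel (by positivity), one_mul]
  exact sum_congr rfl fun j hj ↦ by rw [htr j (mem_range_succ_iff.1 hj)]; ring

theorem aeval_sum_eq_allOnes (hp : IsPredistanceFamily n d lam m p) (hn : 0 < n)
    (hlam : Set.InjOn lam (range (d + 1))) (hm : ∀ t ≤ d, 0 < m t)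
    (hS : IsSpectralDecomposition (G.adjMatrix ℝ) d lam E) (htr : ∀ j ≤ d, trace (E j) = m j)
    (hconn : G.Connected) (hreg : G.IsRegularOfDegree δ) (hlam0 : lam 0 = δ) :
    aeval (G.adjMatrix ℝ) (∑ k ∈ range (d + 1), p k) = of fun _ _ ↦ 1 := by
  set H := ∑ k ∈ range (d + 1), p k
  have hHA : aeval (G.adjMatrix ℝ) H = H.eval (lam 0) • E 0 := by
    rw [hS.aeval_eq, sum_eq_single_of_mem 0 (mem_range.2 d.succ_pos)]
    intro j hj hj0
    have hj' : j ≤ d := by rw [mem_range] at hj; omega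
    have h := hp.mul_eval_sum hn hlam hj'
    rw [if_neg hj0] at h
    rw [(mul_eq_zero.1 h).resolve_left (hm j hj').ne', zero_smul]
  obtain ⟨c, hc⟩ := hconn.exists_eq_const_of_mul_eq_smul hreg
    (by rw [hS.mul_right d.zero_le, hlam0]) (by rw [hS.mul_left d.zero_le, hlam0])
  have h0 := hp.mul_eval_sum hn hlam d.zero_le
  rw [if_pos rfl, ← htr 0 d.zero_le, trace] at h0
  simp only [Matrix.diag, hc, sum_const, card_univ, Fintype.card_fin, nsmul_eq_mul] at h0
  ext u v
  rw [hHA, Matrix.smul_apply, hc, of_apply, smul_eq_mul]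
  exact mul_left_cancel₀ (by positivity : (n : ℝ) ≠ 0) (by linear_combination h0)

theorem aeval_eq_distMatrix_of_forall_dist_lt (hp : IsPredistanceFamily n d lam m p)
    (hH : aeval (G.adjMatrix ℝ) (∑ k ∈ range (d + 1), p k) = of fun _ _ ↦ 1) {k : ℕ} (hk : k ≤ d)
    (hhigh : ∀ j, k < j → j ≤ d → aeval (G.adjMatrix ℝ) (p j) = distMatrix G j)
    (hlow : ∀ u v, G.dist u v < k → aeval (G.adjMatrix ℝ) (p k) u v = 0) :
    aeval (G.adjMatrix ℝ) (p k) = distMatrix G k := by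
  -- at distance exactly `k`, every other term of `H(A) = J` vanishes
  have hmid (u v : Fin n) (huv : G.dist u v = k) : aeval (G.adjMatrix ℝ) (p k) u v = 1 := by
    have h := congrFun (congrFun hH u) v
    rw [map_sum, Matrix.sum_apply, sum_eq_single_of_mem k (mem_range.2 (by omega))] at h
    · exact h
    intro j hj hjk
    rcases lt_or_gt_of_ne hjk with hjk | hjk
    · exact SimpleGraph.aeval_adjMatrix_apply_eq_zero (by rw [hp.natDegree_eq j (by omega)]; omega)
    · rw [hhigh j hjk (mem_range_succ_iff.1 hj)]
      simp [distMatrix, huv, hjk.ne]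
  ext u v
  rcases lt_trichotomy (G.dist u v) k with h | h | h
  · rw [hlow u v h]
    simp [distMatrix, h.ne]
  · rw [hmid u v h]
    simp [distMatrix, h]
  · rw [SimpleGraph.aeval_adjMatrix_apply_eq_zero (by rwa [hp.natDegree_eq k hk])]
    simp [distMatrix, h.ne']

theorem aeval_apply_eq_zero_of_dist_lt (hp : IsPredistanceFamily n d lam m p) (hn : 0 < n)
    (hlam : Set.InjOn lam (range (d + 1))) (hm : ∀ t ≤ d, 0 < m t)
    (hS : IsSpectralDecomposition (G.adjMatrix ℝ) d lam E) (hconn : G.Connected) {k : ℕ}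
    (hk : k < d) (hhigh : ∀ j, k < j → j ≤ d → aeval (G.adjMatrix ℝ) (p j) = distMatrix G j)
    {u v : Fin n} (huv : G.dist u v < k) : aeval (G.adjMatrix ℝ) (p k) u v = 0 := by
  obtain ⟨c, hck, hclow, hrec⟩ := hp.exists_X_mul_eq_sum hn hlam hm hk
  have hmat : G.adjMatrix ℝ * aeval (G.adjMatrix ℝ) (p (k + 1)) =
      ∑ j ∈ range (d + 1), c j • aeval (G.adjMatrix ℝ) (p j) := by
    calc G.adjMatrix ℝ * aeval (G.adjMatrix ℝ) (p (k + 1))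
        = aeval (G.adjMatrix ℝ) (X * p (k + 1)) := by rw [map_mul, aeval_X]
      _ = aeval (G.adjMatrix ℝ) (∑ j ∈ range (d + 1), c j • p j) :=
        hS.aeval_congr fun t ht ↦ by simp [eval_finsetSum, hrec t ht]
      _ = _ := by simp only [map_sum, map_smul]
  -- read the recurrence at `(u, v)`: only the term `c k • p k (A)` can survive
  have h := congrFun (congrFun hmat u) v
  rw [hhigh (k + 1) (by omega) (by omega),
    hconn.adjMatrix_mul_distMatrix_apply_eq_zero (by omega), Matrix.sum_apply,
    sum_eq_single_of_mem k (mem_range.2 (by omega))] at h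
  · simpa [hck] using h.symm
  intro j hj hjk
  rcases lt_or_gt_of_ne hjk with hjk | hjk
  · simp [hclow j hjk]
  · rw [hhigh j hjk (mem_range_succ_iff.1 hj)]
    simp [distMatrix, show G.dist u v ≠ j by omega]

theorem aeval_eq_distMatrix_of_aeval_sum_eq_ballMatrix (hp : IsPredistanceFamily n d lam m p)
    (hn : 0 < n) (hlam : Set.InjOn lam (range (d + 1))) (hm : ∀ t ≤ d, 0 < m t)
    (hS : IsSpectralDecomposition (G.adjMatrix ℝ) d lam E) (hconn : G.Connected)
    (hH : aeval (G.adjMatrix ℝ) (∑ k ∈ range (d + 1), p k) = of fun _ _ ↦ 1)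
    (hball : aeval (G.adjMatrix ℝ) (∑ k ∈ range d, p k) = ballMatrix G (d - 1)) :
    ∀ i ≤ d, aeval (G.adjMatrix ℝ) (p i) = distMatrix G i := by
  have hbase : aeval (G.adjMatrix ℝ) (p d) = distMatrix G d := by
    refine hp.aeval_eq_distMatrix_of_forall_dist_lt hH le_rfl (fun j hj hjd ↦ by omega)
      fun u v huv ↦ ?_
    have h := congrFun (congrFun hH u) v
    rw [sum_range_succ, map_add, Matrix.add_apply, hball] at h
    simpa [ballMatrix, show G.dist u v ≤ d - 1 by omega] using h
  suffices ∀ k ≤ d, ∀ j, k ≤ j → j ≤ d → aeval (G.adjMatrix ℝ) (p j) = distMatrix G j from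
    fun i hi ↦ this i hi i le_rfl hi
  intro k hk
  induction hk using Nat.decreasingInduction with
  | self =>
    intro j hj hjd
    obtain rfl : j = d := by omega
    exact hbase
  | of_succ k hk ih =>
    intro j hj hjd
    rcases hj.eq_or_lt with rfl | hj
    · exact hp.aeval_eq_distMatrix_of_forall_dist_lt hH hk.le ih fun u v huv ↦
        hp.aeval_apply_eq_zero_of_dist_lt hn hlam hm hS hconn hk ih huv
    · exact ih j hj hjd

end IsPredistanceFamily

theorem spectral_excess_theorem_harmonic_mean_general
    {n d : ℕ} (hn : 0 < n) (G : SimpleGraph (Fin n)) [DecidableRel G.Adj]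
    (hconn : G.Connected) (δ : ℕ) (hreg : G.IsRegularOfDegree δ)
    (hd : 1 ≤ d)
    (lam : ℕ → ℝ) (hlam : StrictAntiOn lam (Set.Iic d)) (hlam0 : lam 0 = (δ : ℝ))
    (m : ℕ → ℝ) (hm : ∀ j ≤ d, 0 < m j)
    (E : ℕ → Matrix (Fin n) (Fin n) ℝ)
    (hEmul : ∀ j ≤ d, ∀ k ≤ d, E j * E k = if j = k then E j else 0)
    (hEsum : ∑ j ∈ Finset.range (d + 1), E j = 1)
    (hAE : G.adjMatrix ℝ = ∑ j ∈ Finset.range (d + 1), lam j • E j)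
    (htr : ∀ j ≤ d, (E j).trace = m j)
    (p : ℕ → Polynomial ℝ) (hpdeg : ∀ k ≤ d, (p k).natDegree = k) (hpne : ∀ k ≤ d, p k ≠ 0)
    (horth : ∀ k ≤ d, ∀ l ≤ d,
      (1 / (n : ℝ)) * ∑ t ∈ Finset.range (d + 1),
          m t * (p k).eval (lam t) * (p l).eval (lam t)
        = if k = l then (p k).eval (lam 0) else 0) :
    (∀ i ≤ d, Polynomial.aeval (G.adjMatrix ℝ) (p i) = distMatrix G i) ↔
      (∑ k ∈ Finset.range d, p k).eval (lam 0)
        = (n : ℝ) / ∑ u : Fin n,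
            ((Finset.univ.filter fun v => G.dist u v ≤ d - 1).card : ℝ)⁻¹ := by
  have hS : IsSpectralDecomposition (G.adjMatrix ℝ) d lam E := ⟨hEmul, hEsum, hAE⟩
  have hp : IsPredistanceFamily n d lam m p := ⟨hpdeg, hpne, horth⟩
  have hinj : Set.InjOn lam (range (d + 1)) :=
    hlam.injOn.mono fun j hj ↦ Set.mem_Iic.2 (mem_range_succ_iff.1 hj)
  constructor
  · intro hdr
    have hcard (u : Fin n) := hlam0 ▸ hreg.card_ball_eq_eval_of_aeval_eq_distMatrix hd hdr u
    have hσ : 0 < (∑ k ∈ range d, p k).eval (lam 0) := by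
      rw [← hcard ⟨0, hn⟩]
      exact_mod_cast card_pos.2 ⟨(⟨0, hn⟩ : Fin n), by simp⟩
    simp only [hcard, sum_const, card_univ, Fintype.card_fin, nsmul_eq_mul]
    field_simp
  · intro hharm
    have hH := hp.aeval_sum_eq_allOnes hn hinj hm hS htr hconn hreg hlam0
    have hball : aeval (G.adjMatrix ℝ) (∑ k ∈ range d, p k) = ballMatrix G (d - 1) :=
      hconn.eq_ballMatrix_of_sum_sq_eq ((SimpleGraph.isSymm_adjMatrix G).aeval _)
        (fun u v huv ↦ SimpleGraph.aeval_adjMatrix_apply_eq_zero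
          ((hp.natDegree_sum_le (N := d) (by omega)).trans_lt huv))
        (fun u ↦ by rw [hreg.sum_aeval_adjMatrix_apply, hlam0])
        (hp.sum_sq_aeval_sum_apply hn (SimpleGraph.isSymm_adjMatrix G) hS htr (by omega)) hharm
    exact hp.aeval_eq_distMatrix_of_aeval_sum_eq_ballMatrix hn hinj hm hS hconn hH hball

/-- Harmonic mean version of the spectral excess theorem: a regular graph with `D = d` is
distance-regular iff `s_{d-1}(λ0) = n / Σ_u |N_{d-1}(u)|⁻¹`. -/
theorem spectral_excess_theorem_harmonic_mean
    {n d : ℕ} (hn : 0 < n) (G : SimpleGraph (Fin n)) [DecidableRel G.Adj]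
    (hconn : G.Connected) (δ : ℕ) (hreg : G.IsRegularOfDegree δ)
    (hdiam : G.diam = d) (hd : 1 ≤ d)
    (lam : ℕ → ℝ) (hlam : StrictAntiOn lam (Set.Iic d)) (hlam0 : lam 0 = (δ : ℝ))
    (m : ℕ → ℝ) (hm : ∀ j ≤ d, 0 < m j)
    (E : ℕ → Matrix (Fin n) (Fin n) ℝ)
    (hEsym : ∀ j ≤ d, (E j)ᵀ = E j)
    (hEmul : ∀ j ≤ d, ∀ k ≤ d, E j * E k = if j = k then E j else 0)
    (hEsum : ∑ j ∈ Finset.range (d + 1), E j = 1)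
    (hAE : G.adjMatrix ℝ = ∑ j ∈ Finset.range (d + 1), lam j • E j)
    (htr : ∀ j ≤ d, (E j).trace = m j)
    (p : ℕ → Polynomial ℝ) (hpdeg : ∀ k ≤ d, (p k).natDegree = k) (hpne : ∀ k ≤ d, p k ≠ 0)
    (horth : ∀ k ≤ d, ∀ l ≤ d,
      (1 / (n : ℝ)) * ∑ t ∈ Finset.range (d + 1),
          m t * (p k).eval (lam t) * (p l).eval (lam t)
        = if k = l then (p k).eval (lam 0) else 0) :
    (∀ i ≤ d, Polynomial.aeval (G.adjMatrix ℝ) (p i) = distMatrix G i) ↔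
      (∑ k ∈ Finset.range d, p k).eval (lam 0)
        = (n : ℝ) / ∑ u : Fin n,
            ((Finset.univ.filter fun v => G.dist u v ≤ d - 1).card : ℝ)⁻¹ :=
  spectral_excess_theorem_harmonic_mean_general hn G hconn δ hreg hd lam hlam hlam0 m hm E hEmul
    hEsum hAE htr p hpdeg hpne horth
end
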